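/- Let R₁ and R₂ be commutative rings with identity 1 ≠ 0, each having only finitely many ideals, and suppose each of R₁ and R₂ has at least 4 ideals (counting the zero ideal and the whole ring). Then the intersection graph Γ(R₁ × R₂) of the product ring R₁ × R₂ is Hamiltonian. -/

import Mathlib

/-!
An ideal of `R₁ × R₂` is a product `I × J`, and `(I × J) ∩ (I' × J') = (I ∩ I') × (J ∩ J')`,
so `Γ(R₁ × R₂)` is the meet graph of the lattice `Ideal R₁ × Ideal R₂`: its vertices are the
pairs other than `(0, 0)` and `(R₁, R₂)`, adjacent when they meet nontrivially in some
coordinate. Fix a nontrivial ideal `a` of `R₁`, let `a'` run over the other nontrivial ideals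
of `R₁` and `b` over the nontrivial ideals of `R₂` (at least one of each). Then
`(a, 0), [(a, b), (0, b), (R₁, b)]_b, (a, R₂), (0, R₂), [(a', b)_b, (a', 0), (a', R₂)]_a', (R₁, 0)`
lists every vertex once, and any two cyclically consecutive entries share a nonzero coordinate or
meet in a nonzero one because the whole ring meets every nonzero ideal.
-/

open scoped Classical

/-- The intersection graph of a commutative ring: vertices are the nontrivial ideals,
two distinct ideals being adjacent iff their intersection is nonzero. -/
def intersectionGraph (R : Type*) [CommRing R] :
    SimpleGraph {I : Ideal R // I ≠ ⊥ ∧ I ≠ ⊤} where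
  Adj I J := I ≠ J ∧ (I : Ideal R) ⊓ (J : Ideal R) ≠ ⊥
  symm := ⟨fun I J h => ⟨h.1.symm, by rw [inf_comm]; exact h.2⟩⟩
  loopless := ⟨fun I h => h.1 rfl⟩

namespace List

variable {α β : Type*}

theorem IsChain.and {R S : α → α → Prop} {l : List α} (hR : l.IsChain R) (hS : l.IsChain S) :
    l.IsChain fun a b => R a b ∧ S a b :=
  isChain_iff_forall_rel_of_append_cons_cons.2 fun _ _ _ _ h =>
    ⟨isChain_iff_forall_rel_of_append_cons_cons.1 hR h,
      isChain_iff_forall_rel_of_append_cons_cons.1 hS h⟩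

theorem Nodup.isChain_ne_cons_append_singleton {a : α} {l : List α} (h : (a :: l).Nodup)
    (hl : l ≠ []) : (a :: l ++ [a]).IsChain (· ≠ ·) := by
  refine (Pairwise.isChain h).append (isChain_singleton a) ?_
  intro x hx y hy hxy
  simp only [head?_cons, Option.mem_some_iff] at hy
  rw [getLast?_cons, getLast?_eq_some_getLast hl, Option.getD_some, Option.mem_some_iff] at hx
  exact (nodup_cons.1 h).1 (hy ▸ hxy ▸ hx ▸ getLast_mem hl)

theorem isChain_cons_flatMap_append {R : β → β → Prop} {S : β → Prop} {x : β} {l : List α}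
    {f : α → List β} {rest : List β} (hx : S x) (hl : l ≠ [])
    (hblock : ∀ a ∈ l, ∀ s, S s → (s :: f a).IsChain R)
    (hlast : ∀ a ∈ l, ∃ t, (f a).getLast? = some t ∧ S t ∧ (t :: rest).IsChain R) :
    (x :: (l.flatMap f ++ rest)).IsChain R := by
  induction l generalizing x with
  | nil => exact absurd rfl hl
  | cons a l ih =>
    obtain ⟨t, ht, hSt, hrest⟩ := hlast a mem_cons_self
    obtain ⟨init, hinit⟩ := getLast?_eq_some_iff.1 ht
    rw [flatMap_cons, append_assoc, hinit, append_assoc, singleton_append, ← cons_append,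
      isChain_split, cons_append, ← hinit]
    refine ⟨hblock a mem_cons_self x hx, ?_⟩
    rcases eq_or_ne l [] with rfl | hl'
    · simpa using hrest
    · exact ih hSt hl' (fun b hb => hblock b (mem_cons_of_mem a hb))
        (fun b hb => hlast b (mem_cons_of_mem a hb))

end List

theorem SimpleGraph.exists_isHamiltonianCycle_of_isChain {V : Type*} [DecidableEq V]
    {G : SimpleGraph V} (v : V) (l : List V)
    (hchain : (v :: l ++ [v]).IsChain fun x y => x ≠ y → G.Adj x y)
    (hnodup : (v :: l).Nodup) (hmem : ∀ w, w ∈ v :: l) (hlen : 2 ≤ l.length) :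
    ∃ p : G.Walk v v, p.IsHamiltonianCycle := by
  have hne : (v :: l ++ [v]).IsChain (· ≠ ·) :=
    hnodup.isChain_ne_cons_append_singleton (List.ne_nil_of_length_pos (by omega))
  have hadj : (v :: l ++ [v]).IsChain G.Adj := (hchain.and hne).imp fun _ _ h => h.1 h.2
  obtain ⟨p, hp⟩ : ∃ p : G.Walk v v, p.support = v :: (l ++ [v]) :=
    ⟨(Walk.ofSupport (v :: (l ++ [v])) (List.cons_ne_nil _ _) hadj).copy rfl (by simp),
      (Walk.support_copy _ _ _).trans (Walk.support_ofSupport _ _)⟩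
  have hlength : p.length = l.length + 1 := by
    simpa using congrArg List.length hp
  have htail : p.tail.support = l ++ [v] := by
    rw [Walk.support_tail_of_not_nil _ (by simp [← Walk.length_eq_zero_iff, hlength]), hp,
      List.tail_cons]
  have hnodup' : (l ++ [v]).Nodup := List.nodup_append_comm.mp hnodup
  refine ⟨p, Walk.isHamiltonianCycle_isCycle_and_isHamiltonian_tail.mpr
    ⟨Walk.isCycle_iff_isPath_tail_and_le_length.mpr ⟨?_, by omega⟩, fun w => ?_⟩⟩
  · rwa [Walk.isPath_def, htail]
  · rw [htail]
    exact List.count_eq_one_of_mem hnodup' (by simpa [or_comm] using hmem w)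

section Prod

variable {α β : Type*}

@[simp]
theorem Prod.mk_eq_bot_iff [Bot α] [Bot β] {x : α} {y : β} : (x, y) = ⊥ ↔ x = ⊥ ∧ y = ⊥ :=
  Prod.ext_iff

@[simp]
theorem Prod.mk_eq_top_iff [Top α] [Top β] {x : α} {y : β} : (x, y) = ⊤ ↔ x = ⊤ ∧ y = ⊤ :=
  Prod.ext_iff

theorem Prod.inf_eq_bot_iff [Min α] [Min β] [Bot α] [Bot β] {p q : α × β} :
    p ⊓ q = ⊥ ↔ p.1 ⊓ q.1 = ⊥ ∧ p.2 ⊓ q.2 = ⊥ :=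
  Prod.ext_iff

end Prod

def meetGraph (α : Type*) [Lattice α] [BoundedOrder α] :
    SimpleGraph {a : α // a ≠ ⊥ ∧ a ≠ ⊤} where
  Adj a b := a ≠ b ∧ (a : α) ⊓ b ≠ ⊥
  symm := ⟨fun _ _ h => ⟨h.1.symm, by rw [inf_comm]; exact h.2⟩⟩
  loopless := ⟨fun _ h => h.1 rfl⟩

theorem intersectionGraph_eq_meetGraph (R : Type*) [CommRing R] :
    intersectionGraph R = meetGraph (Ideal R) :=
  rfl

section MeetGraph

variable {α β : Type*} [Lattice α] [BoundedOrder α] [Lattice β] [BoundedOrder β]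

def OrderIso.meetGraphIso (e : α ≃o β) : meetGraph α ≃g meetGraph β where
  toEquiv := e.toEquiv.subtypeEquiv fun a => by simp
  map_rel_iff' {a b} := by
    simp only [meetGraph, Equiv.subtypeEquiv_apply, ne_eq, Subtype.ext_iff,
      OrderIso.coe_toEquiv, e.apply_eq_iff_eq, ← e.map_inf, map_eq_bot_iff]

theorem meetGraph.exists_isHamiltonianCycle_of_isChain [DecidableEq α] (a : α) (l : List α)
    (hchain : (a :: l ++ [a]).IsChain fun x y => x ⊓ y ≠ ⊥) (hnodup : (a :: l).Nodup)
    (hmem : ∀ x, x ∈ a :: l ↔ x ≠ ⊥ ∧ x ≠ ⊤) (hlen : 2 ≤ l.length) :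
    ∃ (v : {x : α // x ≠ ⊥ ∧ x ≠ ⊤}) (p : (meetGraph α).Walk v v), p.IsHamiltonianCycle := by
  have hl : ∀ x ∈ l, x ≠ ⊥ ∧ x ≠ ⊤ := fun x hx => (hmem x).1 (List.mem_cons_of_mem a hx)
  refine ⟨⟨a, (hmem a).1 List.mem_cons_self⟩,
    SimpleGraph.exists_isHamiltonianCycle_of_isChain _ (l.attachWith _ hl) ?_ ?_ ?_ (by simpa)⟩
  · have H : ∀ x ∈ a :: l ++ [a], x ≠ ⊥ ∧ x ≠ ⊤ := fun x hx => (hmem x).1 <| by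
      rcases List.mem_append.1 hx with hx | hx
      · exact hx
      · exact List.mem_singleton.1 hx ▸ List.mem_cons_self
    have hattach : ⟨a, (hmem a).1 List.mem_cons_self⟩ :: l.attachWith _ hl ++
        [⟨a, (hmem a).1 List.mem_cons_self⟩] = (a :: l ++ [a]).attachWith _ H := by
      simp [List.attachWith_append]
    rw [hattach, List.isChain_attachWith]
    exact hchain.imp_of_mem_imp fun x y hx hy hxy => ⟨H x hx, H y hy, fun hne => ⟨hne, hxy⟩⟩
  · exact List.Nodup.of_map Subtype.val (by simpa using hnodup)
  · intro w
    simpa [Subtype.ext_iff] using (hmem w).2 w.2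

def prodCycle (a : α) (as : List α) (bs : List β) : List (α × β) :=
  (a, ⊥) :: ((bs ×ˢ [a, ⊥, ⊤]).map Prod.swap ++ (a, ⊤) :: (⊥, ⊤) ::
    (as ×ˢ (bs ++ [⊥, ⊤]) ++ [(⊤, ⊥)]))

theorem isChain_prodCycle {a : α} {as : List α} {bs : List β} (ha : a ≠ ⊥)
    (has : ∀ a' ∈ as, a' ≠ ⊥) (hbs : ∀ b ∈ bs, b ≠ ⊥) (has₀ : as ≠ []) (hbs₀ : bs ≠ []) :
    (prodCycle a as bs ++ [(a, ⊥)]).IsChain fun p q => p ⊓ q ≠ ⊥ := by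
  have hβ : (⊤ : β) ≠ ⊥ := by
    obtain ⟨b, hb⟩ := List.exists_mem_of_ne_nil bs hbs₀
    exact ne_bot_of_le_ne_bot (hbs b hb) le_top
  simp only [prodCycle, SProd.sprod, List.product, List.map_flatMap, List.map_map,
    List.cons_append, List.append_assoc]
  -- Each column `(a, b), (⊥, b), (⊤, b)` can be entered from any pair whose first coordinate
  -- meets `a`, and each row `(a', b)_b, (a', ⊥), (a', ⊤)` from any pair with second coordinate `⊤`.
  refine List.isChain_cons_flatMap_append (S := fun p => p.1 ⊓ a ≠ ⊥) (by simpa) hbs₀ ?_ ?_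
  · intro b hb s hs
    simp [Prod.inf_eq_bot_iff, hs, hbs b hb]
  · intro b hb
    refine ⟨_, rfl, by simpa, ?_⟩
    simp only [List.isChain_cons_cons]
    refine ⟨by simp [ha], by simpa, ?_⟩
    refine List.isChain_cons_flatMap_append (S := fun p => p.2 = ⊤) rfl has₀ ?_ ?_
    · intro a' ha' s hs
      rw [List.isChain_cons, List.isChain_map]
      refine ⟨?_, List.Pairwise.isChain
        (List.pairwise_of_forall fun _ _ => by simp [has a' ha'])⟩
      obtain ⟨b, bs', rfl⟩ := List.exists_cons_of_ne_nil hbs₀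
      simp [Prod.inf_eq_bot_iff, hs, hbs]
    · intro a' ha'
      refine ⟨(a', ⊤), by simp, rfl, ?_⟩
      simp [has a' ha', ha]

theorem nodup_prodCycle [Nontrivial α] [Nontrivial β] {a : α} {as : List α} {bs : List β}
    (hA : ∀ x ∈ a :: as, x ≠ ⊥ ∧ x ≠ ⊤) (hB : ∀ y ∈ bs, y ≠ ⊥ ∧ y ≠ ⊤)
    (hAn : (a :: as).Nodup) (hBn : bs.Nodup) : (prodCycle a as bs).Nodup := by
  have hα : (⊥ : α) ≠ ⊤ := bot_ne_top
  have hβ : (⊥ : β) ≠ ⊤ := bot_ne_top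
  obtain ⟨ha0, haT⟩ := hA a List.mem_cons_self
  obtain ⟨haas, hAn⟩ := List.nodup_cons.1 hAn
  have hA' : ∀ x ∈ as, x ≠ ⊥ ∧ x ≠ ⊤ := fun x hx => hA x (List.mem_cons_of_mem a hx)
  have hrow : (as ×ˢ (bs ++ [⊥, ⊤])).Nodup :=
    hAn.product (by simpa [List.nodup_append, hBn, hβ] using hB)
  have hcol : ((bs ×ˢ [a, ⊥, ⊤]).map Prod.swap).Nodup :=
    (List.nodup_map_iff Prod.swap_injective).2 (hBn.product (by simp [hα, ha0, haT]))
  have hrow_mem : ∀ x y, (x, y) ∈ as ×ˢ (bs ++ [⊥, ⊤]) → x ∈ as :=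
    fun _ _ h => (List.mem_product.1 h).1
  have hcol_mem : ∀ x y, (x, y) ∈ (bs ×ˢ [a, ⊥, ⊤]).map Prod.swap →
      y ≠ ⊥ ∧ y ≠ ⊤ ∧ x ∉ as := by
    intro x y h
    simp only [List.mem_map_swap, List.mem_product, List.mem_cons, List.not_mem_nil,
      or_false] at h
    refine ⟨(hB y h.1).1, (hB y h.1).2, ?_⟩
    rcases h.2 with rfl | rfl | rfl
    exacts [haas, fun h => (hA' _ h).1 rfl, fun h => (hA' _ h).2 rfl]
  unfold prodCycle
  generalize as ×ˢ (bs ++ [⊥, ⊤]) = W at hrow hrow_mem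
  generalize (bs ×ˢ [a, ⊥, ⊤]).map Prod.swap = C at hcol hcol_mem
  simp only [List.nodup_cons, List.nodup_append, List.mem_append, List.mem_cons, List.nodup_nil,
    List.not_mem_nil, Prod.forall, Prod.mk.injEq]
  grind

theorem mem_prodCycle_iff [Nontrivial α] [Nontrivial β] {a : α} {as : List α} {bs : List β}
    (hA : ∀ x, x ∈ a :: as ↔ x ≠ ⊥ ∧ x ≠ ⊤) (hB : ∀ y, y ∈ bs ↔ y ≠ ⊥ ∧ y ≠ ⊤) {p : α × β} :
    p ∈ prodCycle a as bs ↔ p ≠ ⊥ ∧ p ≠ ⊤ := by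
  obtain ⟨x, y⟩ := p
  have hα : (⊥ : α) ≠ ⊤ := bot_ne_top
  have hβ : (⊥ : β) ≠ ⊤ := bot_ne_top
  simp only [prodCycle, List.mem_cons, List.mem_append, List.mem_map_swap, List.mem_product, hB,
    List.not_mem_nil, or_false, Prod.mk.injEq, ne_eq, Prod.mk_eq_bot_iff, Prod.mk_eq_top_iff,
    not_and]
  grind

end MeetGraph

theorem exists_nodup_list_of_four_le_card {α : Type*} [Bot α] [Top α] [Finite α]
    (h : 4 ≤ Nat.card α) :
    ∃ (a : α) (as : List α), (a :: as).Nodup ∧ as ≠ [] ∧ ∀ x, x ∈ a :: as ↔ x ≠ ⊥ ∧ x ≠ ⊤ := by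
  have := Fintype.ofFinite α
  let s : Finset α := ({⊥, ⊤} : Finset α)ᶜ
  have hs : 2 ≤ s.card := by
    have : ({⊥, ⊤} : Finset α).card ≤ 2 := Finset.card_le_two
    rw [Finset.card_compl, ← Nat.card_eq_fintype_card]
    omega
  obtain ⟨a, as, has⟩ : ∃ a as, s.toList = a :: as :=
    List.exists_cons_of_ne_nil (by simpa using (by omega : s.card ≠ 0))
  refine ⟨a, as, has ▸ s.nodup_toList, ?_, fun x => ?_⟩
  · rintro rfl
    simp [← Finset.length_toList, has] at hs
  · simp [← has, s]

theorem meetGraph_prod_exists_isHamiltonianCycle {α β : Type*} [Lattice α] [BoundedOrder α]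
    [Lattice β] [BoundedOrder β] [DecidableEq α] [DecidableEq β] [Finite α] [Finite β]
    (hα : 4 ≤ Nat.card α) (hβ : 4 ≤ Nat.card β) :
    ∃ (v : {p : α × β // p ≠ ⊥ ∧ p ≠ ⊤}) (p : (meetGraph (α × β)).Walk v v),
      p.IsHamiltonianCycle := by
  have : Nontrivial α := Finite.one_lt_card_iff_nontrivial.1 (by omega)
  have : Nontrivial β := Finite.one_lt_card_iff_nontrivial.1 (by omega)
  obtain ⟨a, as, hAn, has₀, hA⟩ := exists_nodup_list_of_four_le_card hα
  obtain ⟨b, bs, hBn, -, hB⟩ := exists_nodup_list_of_four_le_card hβ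
  have hA' : ∀ x ∈ a :: as, x ≠ ⊥ ∧ x ≠ ⊤ := fun x => (hA x).1
  have hB' : ∀ y ∈ b :: bs, y ≠ ⊥ ∧ y ≠ ⊤ := fun y => (hB y).1
  exact meetGraph.exists_isHamiltonianCycle_of_isChain _ _
    (isChain_prodCycle (hA' a List.mem_cons_self).1
      (fun x hx => (hA' x (List.mem_cons_of_mem a hx)).1) (fun y hy => (hB' y hy).1) has₀
      (List.cons_ne_nil _ _))
    (nodup_prodCycle hA' hB' hAn hBn) (fun _ => mem_prodCycle_iff hA hB) (by simp)

theorem intersectionGraph_prod_hamiltonian_of_four_ideals_general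
    (R₁ R₂ : Type*) [CommRing R₁] [CommRing R₂]
    [Finite (Ideal R₁)] [Finite (Ideal R₂)]
    (h₁ : 4 ≤ Nat.card (Ideal R₁)) (h₂ : 4 ≤ Nat.card (Ideal R₂)) :
    ∃ (a : {I : Ideal (R₁ × R₂) // I ≠ ⊥ ∧ I ≠ ⊤})
      (p : (intersectionGraph (R₁ × R₂)).Walk a a), p.IsHamiltonianCycle := by
  rw [intersectionGraph_eq_meetGraph]
  obtain ⟨v, p, hp⟩ := meetGraph_prod_exists_isHamiltonianCycle h₁ h₂
  let e := (Ideal.idealProdEquiv (R := R₁) (S := R₂)).symm.meetGraphIso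
  exact ⟨e v, p.map e.toHom, hp.map e.bijective⟩

/-- If `R₁` and `R₂` are commutative rings with `1 ≠ 0`, each having
finitely many ideals and at least 4 ideals, then the intersection graph `Γ(R₁ × R₂)`
is Hamiltonian. -/
theorem intersectionGraph_prod_hamiltonian_of_four_ideals
    (R₁ R₂ : Type*) [CommRing R₁] [CommRing R₂] [Nontrivial R₁] [Nontrivial R₂]
    [Finite (Ideal R₁)] [Finite (Ideal R₂)]
    (h₁ : 4 ≤ Nat.card (Ideal R₁)) (h₂ : 4 ≤ Nat.card (Ideal R₂)) :
    ∃ (a : {I : Ideal (R₁ × R₂) // I ≠ ⊥ ∧ I ≠ ⊤})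
      (p : (intersectionGraph (R₁ × R₂)).Walk a a), p.IsHamiltonianCycle :=
  intersectionGraph_prod_hamiltonian_of_four_ideals_general R₁ R₂ h₁ h₂
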